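/- arXiv:1911.12777 — 3 statements merged into one kernel-verified Lean document; each statement's English description precedes it below -/
import Mathlib

section
/- Let μ be a probability measure on a measurable space X, let X' ⊆ X be measurable with ∫_{X'} f_X dμ > 0, and suppose the conditional output density satisfies f_Y(y|x') ≤ e^{εa}·f_Y(y|x) for all x' ∈ X', x ∈ X∖X', with f_Y(y|x) ≥ 0 and the relevant integrals positive and finite. Then the posterior probability Pr_post[X'] = (∫_{X'} f_Y(y|x')f_X(x')dx') / (∫_X f_Y(y|x)f_X(x)dx) satisfies Pr_post[X'] ≤ 1/(1 + e^{-εa}·(Pr_pre[X∖X']/Pr_pre[X'])), where Pr_pre[S] = ∫_S f_X dμ. -/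
open MeasureTheory

theorem bayesian_posterior_bound
    {X : Type*} [MeasurableSpace X] (μ : Measure X) [IsProbabilityMeasure μ]
    (fX fY : X → ℝ) (X' : Set X) (hX' : MeasurableSet X')
    (ε a : ℝ)
    (hfX : ∀ x, 0 ≤ fX x) (hfY : ∀ x, 0 ≤ fY x)
    (hDP : ∀ x' ∈ X', ∀ x ∈ X'ᶜ, fY x' ≤ Real.exp (ε * a) * fY x)
    (hint : Integrable (fun x => fY x * fX x) μ)
    (hintX : Integrable fX μ)
    (hpre_pos : 0 < ∫ x in X', fX x ∂μ)
    (hnum_pos : 0 < ∫ x in X', fY x * fX x ∂μ)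
    (hden_pos : 0 < ∫ x, fY x * fX x ∂μ) :
    (∫ x in X', fY x * fX x ∂μ) / (∫ x, fY x * fX x ∂μ)
      ≤ 1 / (1 + Real.exp (-(ε * a)) *
          ((∫ x in X'ᶜ, fX x ∂μ) / (∫ x in X', fX x ∂μ))) := by
  set N := ∫ x in X', fY x * fX x ∂μ with hN
  set M := ∫ x in X'ᶜ, fY x * fX x ∂μ with hM
  set P := ∫ x in X', fX x ∂μ with hP
  set Q := ∫ x in X'ᶜ, fX x ∂μ with hQ
  set E := Real.exp (ε * a) with hE
  have hEpos : 0 < E := Real.exp_pos _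
  -- step 1: for x ∈ X'ᶜ, N ≤ E * fY x * P
  have step1 : ∀ x ∈ X'ᶜ, N ≤ E * fY x * P := by
    intro x hx
    have : N ≤ ∫ x' in X', (E * fY x) * fX x' ∂μ := by
      apply setIntegral_mono_on (hint.restrict) ((hintX.restrict).const_mul _) hX'
      intro x' hx'
      exact mul_le_mul_of_nonneg_right (hDP x' hx' x hx) (hfX x')
    simpa [integral_const_mul, mul_assoc] using this
  -- step 2: N * Q ≤ E * P * M
  have step2 : N * Q ≤ E * P * M := by
    have h1 : ∫ x in X'ᶜ, N * fX x ∂μ ≤ ∫ x in X'ᶜ, (E * P) * (fY x * fX x) ∂μ := by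
      apply setIntegral_mono_on ((hintX.restrict).const_mul _)
        ((hint.restrict).const_mul _) hX'.compl
      intro x hx
      have := mul_le_mul_of_nonneg_right (step1 x hx) (hfX x)
      nlinarith [hfX x]
    rw [integral_const_mul, integral_const_mul] at h1
    simp only [← hM, ← hQ] at h1
    linarith
  have hMnonneg : 0 ≤ M := by
    apply setIntegral_nonneg hX'.compl
    intro x _; exact mul_nonneg (hfY x) (hfX x)
  have hQnonneg : 0 ≤ Q := by
    apply setIntegral_nonneg hX'.compl
    intro x _; exact hfX x
  -- total = N + M
  have hsplit : ∫ x, fY x * fX x ∂μ = N + M := (integral_add_compl hX' hint).symm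
  rw [hsplit, Real.exp_neg, ← hE]
  have hdpos : 0 < 1 + E⁻¹ * (Q / P) := by positivity
  rw [div_le_div_iff₀ (by linarith [hsplit ▸ hden_pos]) hdpos, one_mul]
  have hkey : N * (E⁻¹ * (Q / P)) ≤ M := by
    rw [div_eq_mul_inv]
    calc N * (E⁻¹ * (Q * P⁻¹)) = (N * Q) * (E⁻¹ * P⁻¹) := by ring
      _ ≤ (E * P * M) * (E⁻¹ * P⁻¹) :=
          mul_le_mul_of_nonneg_right step2 (by positivity)
      _ = M := by field_simp
  nlinarith [hkey]
end

section
/- Let r, R, δ, a > 0 with 0 < r < a ≤ R, and suppose the prior is uniform so that Pr_pre[X'] = r/R and Pr_pre[X̂'_a] = (a-r)/R. If the posterior satisfies Pr_post[X'] ≤ 1/(1 + e^{-εa}·((a-r)/R)/(r/R)), then Pr_post[X'] ≤ r/R + δ whenever ε ≤ -ln((r/(a-r))·(1/(δ + r/R) - 1))/a, provided δ + r/R < 1 and the argument of ln is in (0,1]. -/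
theorem uniform_prior_univariate_bound
    (r R δ a ε post : ℝ)
    (hr : 0 < r) (hra : r < a) (haR : a ≤ R) (hδ : 0 < δ)
    (hδp : δ + r / R < 1)
    (harg0 : 0 < (r / (a - r)) * (1 / (δ + r / R) - 1))
    (harg1 : (r / (a - r)) * (1 / (δ + r / R) - 1) ≤ 1)
    (hpost : post ≤ 1 / (1 + Real.exp (-(ε * a)) * (((a - r) / R) / (r / R))))
    (hεle : ε ≤ -Real.log ((r / (a - r)) * (1 / (δ + r / R) - 1)) / a) :
    post ≤ r / R + δ := by
  set c := (r / (a - r)) * (1 / (δ + r / R) - 1) with hc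
  have ha : 0 < a := hr.trans hra
  have hR : 0 < R := lt_of_lt_of_le ha haR
  have har : 0 < a - r := by linarith
  have hδr : 0 < δ + r / R := by positivity
  -- exp(-(ε a)) ≥ c
  have h1 : Real.log c ≤ -(ε * a) := by
    have h := mul_le_mul_of_nonneg_right hεle ha.le
    rw [div_mul_cancel₀ _ ha.ne'] at h
    linarith
  have hexp : c ≤ Real.exp (-(ε * a)) := by
    calc c = Real.exp (Real.log c) := (Real.exp_log harg0).symm
    _ ≤ _ := Real.exp_le_exp.mpr h1
  have hratio : ((a - r) / R) / (r / R) = (a - r) / r := by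
    field_simp
  rw [hratio] at hpost
  have key : 1 / (δ + r / R) ≤ 1 + Real.exp (-(ε * a)) * ((a - r) / r) := by
    have h2 : c * ((a - r) / r) = 1 / (δ + r / R) - 1 := by
      rw [hc]; field_simp
    nlinarith [mul_le_mul_of_nonneg_right hexp (le_of_lt (div_pos har hr))]
  have hden : 0 < 1 + Real.exp (-(ε * a)) * ((a - r) / r) := by positivity
  have : 1 / (1 + Real.exp (-(ε * a)) * ((a - r) / r)) ≤ δ + (r / R) := by
    rw [div_le_iff₀ hden]
    calc (1:ℝ) = (δ + r / R) * (1 / (δ + r / R)) := by field_simp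
    _ ≤ _ := by
        exact mul_le_mul_of_nonneg_left key hδr.le
  linarith
end

section
/- Let p, q, δ ∈ (0,1) with p + δ < 1, ε' > 0, ε ≥ 0, and let χ > 0 satisfy χ ≥ δ·((p+ε')/(1-(p+ε'))·(q/p) - e^{ε})^{-1}, where (p+ε')/(1-(p+ε'))·(q/p) > e^{ε}. Then 1/(1 + (1/(e^{ε} + δ/χ))·(q/p)) ≤ p + ε'. -/
theorem epsilon_delta_dp_to_guessing_advantage
    (p q δ ε ε' χ : ℝ)
    (hp0 : 0 < p) (hp1 : p < 1) (hq0 : 0 < q) (hq1 : q < 1) (hδ0 : 0 < δ) (hδ1 : δ < 1)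
    (hpε' : p + ε' < 1) (hε' : 0 < ε') (hε : 0 ≤ ε) (hχ : 0 < χ)
    (hdenom : Real.exp ε < (p + ε') / (1 - (p + ε')) * (q / p))
    (hχbound : χ ≥ δ * ((p + ε') / (1 - (p + ε')) * (q / p) - Real.exp ε)⁻¹) :
    1 / (1 + (1 / (Real.exp ε + δ / χ)) * (q / p)) ≤ p + ε' := by
  set A := (p + ε') / (1 - (p + ε')) * (q / p) with hA
  set E := Real.exp ε with hE
  have hE0 : 0 < E := Real.exp_pos ε
  have hs0 : 0 < p + ε' := by linarith
  have hs1 : 0 < 1 - (p + ε') := by linarith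
  have hAE : 0 < A - E := by linarith
  have hδχ : δ / χ ≤ A - E := by
    rw [div_le_iff₀ hχ]
    have := (ge_iff_le.mp hχbound)
    calc δ = δ * (A - E)⁻¹ * (A - E) := by field_simp
    _ ≤ χ * (A - E) := by
        apply mul_le_mul_of_nonneg_right this (le_of_lt hAE)
    _ = (A - E) * χ := mul_comm _ _
  have hEA : E + δ / χ ≤ A := by linarith
  have hEδ0 : 0 < E + δ / χ := by positivity
  have hqp : 0 < q / p := by positivity
  have key : (1 : ℝ) / (1 + (1 / A) * (q / p)) = p + ε' := by
    rw [hA]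
    field_simp
    ring
  rw [← key]
  apply one_div_le_one_div_of_le
  · positivity
  · have h1 : 1 / A ≤ 1 / (E + δ / χ) :=
      one_div_le_one_div_of_le hEδ0 hEA
    nlinarith [mul_le_mul_of_nonneg_right h1 (le_of_lt hqp)]
end
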